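/- For each fixed positive integer t, there are, up to isomorphism, only finitely many finite simple graphs G with th_⌊Z⌋(G) = t. -/

import Mathlib

open SimpleGraph

namespace ZFT

variable {V : Type*} {α : Type*} {β : Type*}

/-! ### Standard zero forcing (simultaneous propagation) -/

/-- One round of simultaneous standard zero forcing: a blue vertex forces its
unique white neighbor. -/
def zStep (G : SimpleGraph V) (S : Set V) : Set V :=
  S ∪ {w | ∃ u ∈ S, G.Adj u w ∧ ∀ x, G.Adj u x → x ∉ S → x = w}

/-- `B` is a standard zero forcing set of `G`. -/
def IsZeroForcingSet (G : SimpleGraph V) (B : Set V) : Prop :=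
  ∃ t : ℕ, (zStep G)^[t] B = Set.univ

/-- The standard propagation time `pt_Z(G;B)` (`⊤` if `B` is not a zero forcing set). -/
noncomputable def ptZ (G : SimpleGraph V) (B : Set V) : ℕ∞ :=
  sInf {n : ℕ∞ | ∃ t : ℕ, n = t ∧ (zStep G)^[t] B = Set.univ}

/-- The standard throttling number `th_Z(G;B) = |B| + pt_Z(G;B)`. -/
noncomputable def thZ (G : SimpleGraph V) (B : Set V) : ℕ∞ :=
  (B.ncard : ℕ∞) + ptZ G B

/-- The standard throttling number `th_Z(G)`. -/
noncomputable def thZgraph (G : SimpleGraph V) : ℕ∞ :=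
  sInf {n : ℕ∞ | ∃ B : Set V, IsZeroForcingSet G B ∧ n = thZ G B}

/-- The standard zero forcing number `Z(G)`. -/
noncomputable def Znum (G : SimpleGraph V) : ℕ :=
  sInf {k : ℕ | ∃ B : Set V, IsZeroForcingSet G B ∧ B.ncard = k}

/-- The standard propagation time `pt_Z(G)`, minimized over minimum zero forcing sets. -/
noncomputable def ptZgraph (G : SimpleGraph V) : ℕ∞ :=
  sInf {n : ℕ∞ | ∃ B : Set V, IsZeroForcingSet G B ∧ B.ncard = Znum G ∧ n = ptZ G B}

/-! ### Sets of standard forces -/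

/-- Validity of a single standard force `u → w` when `blue` is the blue set. -/
def zForceValid (G : SimpleGraph V) (blue : Set V) (u w : V) : Prop :=
  u ∈ blue ∧ w ∉ blue ∧ G.Adj u w ∧ ∀ x, G.Adj u x → x ∉ blue → x = w

/-- Validity of a chronological list of standard forces starting from a blue set. -/
def zValidList (G : SimpleGraph V) : Set V → List (V × V) → Prop
  | _, [] => True
  | blue, p :: L => zForceValid G blue p.1 p.2 ∧ zValidList G (insert p.2 blue) L

/-- The blue set after performing all forces in a list, starting from `B`. -/
def endBlue (B : Set V) (L : List (V × V)) : Set V :=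
  B ∪ {w | ∃ u, (u, w) ∈ L}

/-- The set of vertices that have performed a force in a list. -/
def endForced (L : List (V × V)) : Set V := {u | ∃ w, (u, w) ∈ L}

/-- `F` is a set of standard forces of `B` in `G` (recorded from a maximal
chronological list of forces). -/
def IsZForceSet (G : SimpleGraph V) (B : Set V) (F : Set (V × V)) : Prop :=
  ∃ L : List (V × V), zValidList G B L ∧
    (∀ u w, ¬ zForceValid G (endBlue B L) u w) ∧ F = {p | p ∈ L}

/-- The set of blue vertices at time `t` when the forces of `F` are performed at the
earliest possible time steps, starting from `B` blue. -/
def zBlueAt (G : SimpleGraph V) (F : Set (V × V)) (B : Set V) : ℕ → Set V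
  | 0 => B
  | t + 1 =>
      zBlueAt G F B t ∪ {w | ∃ v, (v, w) ∈ F ∧ zForceValid G (zBlueAt G F B t) v w}

/-- The standard propagation time `pt_Z(G;F)` of a set of forces `F` of `B`. -/
noncomputable def ptZofF (G : SimpleGraph V) (F : Set (V × V)) (B : Set V) : ℕ∞ :=
  sInf {n : ℕ∞ | ∃ t : ℕ, n = t ∧ zBlueAt G F B t = Set.univ}

/-! ### `⌊Z⌋` (minor monotone floor) forcing -/

/-- Validity of a single `⌊Z⌋` force `u → w`: `u` is blue and has not yet forced, `w`
is white, and either `w` is the unique white neighbor of `u`, or all neighbors of `u`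
are blue (a hop). -/
def zfForceValid (G : SimpleGraph V) (blue forced : Set V) (u w : V) : Prop :=
  u ∈ blue ∧ w ∉ blue ∧ u ∉ forced ∧
    ((G.Adj u w ∧ ∀ x, G.Adj u x → x ∉ blue → x = w) ∨ ∀ x, G.Adj u x → x ∈ blue)

/-- Validity of a chronological list of `⌊Z⌋` forces. -/
def zfValidList (G : SimpleGraph V) : Set V → Set V → List (V × V) → Prop
  | _, _, [] => True
  | blue, forced, p :: L =>
      zfForceValid G blue forced p.1 p.2 ∧
        zfValidList G (insert p.2 blue) (insert p.1 forced) L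

/-- `F` is a set of `⌊Z⌋` forces of `B` in `G` (recorded from a maximal chronological
list of `⌊Z⌋` forces starting with `B` blue). -/
def IsZFForceSet (G : SimpleGraph V) (B : Set V) (F : Set (V × V)) : Prop :=
  ∃ L : List (V × V), zfValidList G B ∅ L ∧
    (∀ u w, ¬ zfForceValid G (endBlue B L) (endForced L) u w) ∧ F = {p | p ∈ L}

/-- The set of blue vertices at time `t` when the `⌊Z⌋` forces of `F` are performed at
the earliest possible time steps, starting from `B` blue. -/
def zfBlueAt (G : SimpleGraph V) (F : Set (V × V)) (B : Set V) : ℕ → Set V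
  | 0 => B
  | t + 1 =>
      zfBlueAt G F B t ∪
        {w | ∃ v, (v, w) ∈ F ∧ v ∈ zfBlueAt G F B t ∧ w ∉ zfBlueAt G F B t ∧
          (∀ w', (v, w') ∈ F → w' ∈ zfBlueAt G F B t → w' ∈ B) ∧
          ((G.Adj v w ∧ ∀ x, G.Adj v x → x ∉ zfBlueAt G F B t → x = w) ∨
            ∀ x, G.Adj v x → x ∈ zfBlueAt G F B t)}

/-- The `⌊Z⌋` propagation time `pt_⌊Z⌋(G;F)` of a set of `⌊Z⌋` forces `F` of `B`. -/
noncomputable def ptZFofF (G : SimpleGraph V) (F : Set (V × V)) (B : Set V) : ℕ∞ :=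
  sInf {n : ℕ∞ | ∃ t : ℕ, n = t ∧ zfBlueAt G F B t = Set.univ}

/-- The `⌊Z⌋` propagation time `pt_⌊Z⌋(G;B)`, minimized over sets of `⌊Z⌋` forces of `B`. -/
noncomputable def ptZF (G : SimpleGraph V) (B : Set V) : ℕ∞ :=
  sInf {n : ℕ∞ | ∃ F : Set (V × V), IsZFForceSet G B F ∧ n = ptZFofF G F B}

/-- The `⌊Z⌋` throttling number `th_⌊Z⌋(G;B) = |B| + pt_⌊Z⌋(G;B)`. -/
noncomputable def thZF (G : SimpleGraph V) (B : Set V) : ℕ∞ :=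
  (B.ncard : ℕ∞) + ptZF G B

/-- The `⌊Z⌋` throttling number `th_⌊Z⌋(G)`, minimized over all `B ⊆ V(G)`. -/
noncomputable def thZFgraph (G : SimpleGraph V) : ℕ∞ :=
  sInf {n : ℕ∞ | ∃ B : Set V, n = thZF G B}

/-- `B` is a `⌊Z⌋` forcing set of `G`. -/
def IsZFForcingSet (G : SimpleGraph V) (B : Set V) : Prop :=
  ∃ F : Set (V × V), IsZFForceSet G B F ∧ B ∪ {w | ∃ u, (u, w) ∈ F} = Set.univ

/-- The `⌊Z⌋` forcing number `⌊Z⌋(G)`. -/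
noncomputable def ZFnum (G : SimpleGraph V) : ℕ :=
  sInf {k : ℕ | ∃ B : Set V, IsZFForcingSet G B ∧ B.ncard = k}

/-- The `⌊Z⌋` propagation time `pt_⌊Z⌋(G)`, minimized over minimum `⌊Z⌋` forcing sets. -/
noncomputable def ptZFgraph (G : SimpleGraph V) : ℕ∞ :=
  sInf {n : ℕ∞ | ∃ B : Set V, IsZFForcingSet G B ∧ B.ncard = ZFnum G ∧ n = ptZF G B}

/-! ### Contractions, minors, and products -/

/-- The graph obtained from `H` by contracting (all) the edges in `C`: its vertices are
the connected components of the spanning subgraph of `H` with edge set `C ∩ E(H)`, and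
two distinct components are adjacent iff `H` has an edge between them. -/
def contractEdges (H : SimpleGraph α) (C : Set (Sym2 α)) :
    SimpleGraph (SimpleGraph.fromEdgeSet C ⊓ H).ConnectedComponent where
  Adj c d := c ≠ d ∧ ∃ a b, H.Adj a b ∧
      (SimpleGraph.fromEdgeSet C ⊓ H).connectedComponentMk a = c ∧
      (SimpleGraph.fromEdgeSet C ⊓ H).connectedComponentMk b = d
  symm := ⟨by
    rintro c d ⟨hcd, a, b, hab, ha, hb⟩
    exact ⟨hcd.symm, b, a, hab.symm, hb, ha⟩⟩
  loopless := ⟨fun c h => h.1 rfl⟩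

/-- `G` is a minor of `H`: `G` is isomorphic to a subgraph of a graph obtained from an
induced subgraph of `H` by contracting a set of edges. -/
def IsMinor (G : SimpleGraph β) (H : SimpleGraph α) : Prop :=
  ∃ (s : Set α) (C : Set (Sym2 s))
    (G'' : SimpleGraph (SimpleGraph.fromEdgeSet C ⊓ H.induce s).ConnectedComponent),
      G'' ≤ contractEdges (H.induce s) C ∧ Nonempty (G ≃g G'')

/-- The Cartesian product `K_a □ P_{b+1}`. -/
def prodKP (a b : ℕ) : SimpleGraph (Fin a × Fin (b + 1)) :=
  (⊤ : SimpleGraph (Fin a)) □ SimpleGraph.pathGraph (b + 1)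

/-- The path edges of `K_a □ P_{b+1}` (edges within the copies of `P_{b+1}`). -/
def pathEdges (a b : ℕ) : Set (Sym2 (Fin a × Fin (b + 1))) :=
  {e | ∃ (i : Fin a) (j j' : Fin (b + 1)),
    (SimpleGraph.pathGraph (b + 1)).Adj j j' ∧ e = s((i, j), (i, j'))}

/-- The complete edges of `K_a □ P_{b+1}` (edges within the copies of `K_a`). -/
def completeEdges (a b : ℕ) : Set (Sym2 (Fin a × Fin (b + 1))) :=
  {e | ∃ (i i' : Fin a) (j : Fin (b + 1)), i ≠ i' ∧ e = s((i, j), (i', j))}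

/-- The star `K_{1,n-1}` on `n` vertices: vertex `0` is adjacent to all others. -/
def starGraph (n : ℕ) : SimpleGraph (Fin n) where
  Adj i j := i ≠ j ∧ ((i : ℕ) = 0 ∨ (j : ℕ) = 0)
  symm := ⟨by rintro i j ⟨h1, h2⟩; exact ⟨h1.symm, h2.symm⟩⟩
  loopless := ⟨fun i h => h.1 rfl⟩

/-- The independence number `α(G)`. -/
noncomputable def indepNum (G : SimpleGraph V) : ℕ :=
  sSup {k : ℕ | ∃ s : Set V, (∀ a ∈ s, ∀ b ∈ s, a ≠ b → ¬ G.Adj a b) ∧ s.ncard = k}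

end ZFT

/-! Each vertex performs at most one force, so in one round of `⌊Z⌋` forcing every blue
vertex adds at most one new blue vertex and the blue set at most doubles. Hence if
`|B| + s ≤ t` and `B` colours the graph in `s` rounds, the graph has at most
`|B| 2^s ≤ t 2^t` vertices, and there are finitely many graphs on that many vertices. -/

lemma ENat.sInf_mem_of_ne_top {S : Set ℕ∞} (h : sInf S ≠ ⊤) : sInf S ∈ S :=
  csInf_mem (Set.nonempty_iff_ne_empty.2 fun hS => h (hS ▸ sInf_empty))

lemma Set.ncard_setOf_exists_mem_le_of_injOn_fst {α β : Type*} {F : Set (α × β)} {s : Set α}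
    (hs : s.Finite) (hF : Set.InjOn Prod.fst F) :
    {b | ∃ a ∈ s, (a, b) ∈ F}.ncard ≤ s.ncard := by
  set F' := {p ∈ F | p.1 ∈ s}
  have hF' : Set.InjOn Prod.fst F' := hF.mono fun _ hp => hp.1
  have hfst : Prod.fst '' F' ⊆ s := by rintro _ ⟨p, hp, rfl⟩; exact hp.2
  have hfin : F'.Finite := Set.Finite.of_finite_image (hs.subset hfst) hF'
  have hsnd : {b | ∃ a ∈ s, (a, b) ∈ F} = Prod.snd '' F' := by
    ext b
    constructor
    · rintro ⟨a, ha, hab⟩; exact ⟨(a, b), ⟨hab, ha⟩, rfl⟩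
    · rintro ⟨p, ⟨hp, hps⟩, rfl⟩; exact ⟨p.1, hps, hp⟩
  calc {b | ∃ a ∈ s, (a, b) ∈ F}.ncard = (Prod.snd '' F').ncard := by rw [hsnd]
    _ ≤ F'.ncard := Set.ncard_image_le hfin
    _ = (Prod.fst '' F').ncard := (hF'.ncard_image).symm
    _ ≤ s.ncard := Set.ncard_le_ncard hfst hs

namespace ZFT

variable {V : Type*} {G : SimpleGraph V}

lemma zfValidList.fst_notMem_forced {blue forced : Set V} {L : List (V × V)}
    (hL : zfValidList G blue forced L) : ∀ p ∈ L, p.1 ∉ forced := by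
  induction L generalizing blue forced with
  | nil => simp
  | cons q L ih =>
    intro p hp
    rcases List.mem_cons.1 hp with rfl | hp
    · exact hL.1.2.2.1
    · exact fun hf => ih hL.2 p hp (Set.mem_insert_of_mem _ hf)

lemma zfValidList.nodup_map_fst {blue forced : Set V} {L : List (V × V)}
    (hL : zfValidList G blue forced L) : (L.map Prod.fst).Nodup := by
  induction L generalizing blue forced with
  | nil => simp
  | cons q L ih =>
    refine List.nodup_cons.2 ⟨?_, ih hL.2⟩
    simp only [List.mem_map, not_exists, not_and]
    intro p hp hpq
    exact hL.2.fst_notMem_forced p hp (hpq ▸ Set.mem_insert _ _)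

lemma IsZFForceSet.injOn_fst {B : Set V} {F : Set (V × V)} (hF : IsZFForceSet G B F) :
    Set.InjOn Prod.fst F := by
  obtain ⟨L, hL, -, rfl⟩ := hF
  exact fun _ hp _ hq => List.inj_on_of_nodup_map hL.nodup_map_fst hp hq

lemma zfBlueAt_succ_subset (F : Set (V × V)) (B : Set V) (k : ℕ) :
    zfBlueAt G F B (k + 1) ⊆
      zfBlueAt G F B k ∪ {w | ∃ v ∈ zfBlueAt G F B k, (v, w) ∈ F} :=
  fun _ hw => hw.imp id fun ⟨v, hvw, hv, _⟩ => ⟨v, hv, hvw⟩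

lemma ncard_zfBlueAt_le [Finite V] {F : Set (V × V)} (hF : Set.InjOn Prod.fst F)
    (B : Set V) (k : ℕ) : (zfBlueAt G F B k).ncard ≤ B.ncard * 2 ^ k := by
  induction k with
  | zero => simp [zfBlueAt]
  | succ k ih =>
    set P := zfBlueAt G F B k
    calc (zfBlueAt G F B (k + 1)).ncard
        ≤ (P ∪ {w | ∃ v ∈ P, (v, w) ∈ F}).ncard :=
          Set.ncard_le_ncard (zfBlueAt_succ_subset F B k)
      _ ≤ P.ncard + {w | ∃ v ∈ P, (v, w) ∈ F}.ncard := Set.ncard_union_le _ _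
      _ ≤ P.ncard + P.ncard :=
          Nat.add_le_add_left (Set.ncard_setOf_exists_mem_le_of_injOn_fst P.toFinite hF) _
      _ ≤ B.ncard * 2 ^ (k + 1) := by rw [pow_succ, ← mul_assoc]; omega

lemma exists_of_thZFgraph_le {t : ℕ} (h : thZFgraph G ≤ t) :
    ∃ (B : Set V) (F : Set (V × V)) (s : ℕ), IsZFForceSet G B F ∧
      zfBlueAt G F B s = Set.univ ∧ B.ncard + s ≤ t := by
  have hth : thZFgraph G ≠ ⊤ := ne_top_of_le_ne_top (ENat.natCast_ne_top t) h
  obtain ⟨B, hB⟩ := ENat.sInf_mem_of_ne_top hth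
  have hpt : ptZF G B ≠ ⊤ := fun htop => hth (by rw [thZFgraph, hB, thZF, htop, add_top])
  obtain ⟨F, hF, hFB⟩ := ENat.sInf_mem_of_ne_top hpt
  obtain ⟨s, hs, hsB⟩ := ENat.sInf_mem_of_ne_top (hFB ▸ hpt : ptZFofF G F B ≠ ⊤)
  refine ⟨B, F, s, hF, hsB, ?_⟩
  have : thZFgraph G = ((B.ncard + s : ℕ) : ℕ∞) := by
    rw [thZFgraph, hB, thZF, ptZF, hFB, ptZFofF, hs, Nat.cast_add]
  exact_mod_cast this ▸ h

lemma card_le_of_thZFgraph_le [Finite V] {t : ℕ} (h : thZFgraph G ≤ t) :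
    Nat.card V ≤ t * 2 ^ t := by
  obtain ⟨B, F, s, hF, hs, hBs⟩ := exists_of_thZFgraph_le h
  calc Nat.card V = (zfBlueAt G F B s).ncard := by rw [hs, Set.ncard_univ]
    _ ≤ B.ncard * 2 ^ s := ncard_zfBlueAt_le hF.injOn_fst B s
    _ ≤ t * 2 ^ t := Nat.mul_le_mul (by omega) (Nat.pow_le_pow_right two_pos (by omega))

theorem stmt10_general (t : ℕ) :
    {p : (n : ℕ) × SimpleGraph (Fin n) | thZFgraph p.2 = (t : ℕ∞)}.Finite := by
  refine (Set.finite_Iic (t * 2 ^ t)).biUnion (fun n _ => Set.finite_range (Sigma.mk n))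
    |>.subset ?_
  rintro ⟨n, G⟩ hG
  have hn : n ≤ t * 2 ^ t := by
    simpa using card_le_of_thZFgraph_le (le_of_eq hG)
  exact Set.mem_biUnion hn ⟨G, rfl⟩

/-- for each fixed `t ≥ 1` there are, up to isomorphism, only finitely
many graphs with `⌊Z⌋` throttling number `t`. -/
theorem stmt10 (t : ℕ) (ht : 0 < t) :
    {p : (n : ℕ) × SimpleGraph (Fin n) | thZFgraph p.2 = (t : ℕ∞)}.Finite :=
  stmt10_general t

end ZFT
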